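/- There exists a constant c₁ ∈ (0,1], depending only on α and d, such that for all x, y ∈ ℤ^d with x ≠ y and every L¹-geodesic z_0, …, z_m from x to y one has c₁ · ρ_x(|x−y|) ≤ Σ_{i=0}^m ν_{z_i} ≤ c₁^{−1} · ρ_x(|x−y|). -/
import Mathlib


open scoped BigOperators

/-- ℓ∞ norm on ℤ^d, as a natural number. -/
def linf {d : ℕ} (x : Fin d → ℤ) : ℕ :=
  Finset.univ.sup fun i => (x i).natAbs

/-- ℓ¹ norm on ℤ^d, as a natural number. -/
def l1 {d : ℕ} (x : Fin d → ℤ) : ℕ :=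
  ∑ i, (x i).natAbs

/-- `ν x = (max(|x|,1))^α`. -/
noncomputable def nu (α : ℝ) {d : ℕ} (x : Fin d → ℤ) : ℝ :=
  ((max (linf x) 1 : ℕ) : ℝ) ^ α

/-- The conductance `μ x y = (max(|x|,|y|))^(-α)` if `|x-y|₁ = 1`, and `0` otherwise. -/
noncomputable def mu (α : ℝ) {d : ℕ} (x y : Fin d → ℤ) : ℝ :=
  if l1 (x - y) = 1 then ((max (linf x) (linf y) : ℕ) : ℝ) ^ (-α) else 0

/-- `z 0, …, z m` is a path: consecutive points are at ℓ¹-distance one. -/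
def IsPath {d : ℕ} (z : ℕ → Fin d → ℤ) (m : ℕ) : Prop :=
  ∀ i < m, l1 (z (i + 1) - z i) = 1

/-- The metric `ρ(x,y)`: `0` if `x = y`, otherwise the infimum of `∑ ν (z i)` over
paths from `x` to `y`. -/
noncomputable def rho (α : ℝ) {d : ℕ} (x y : Fin d → ℤ) : ℝ :=
  if x = y then 0
  else sInf {S : ℝ | ∃ (m : ℕ) (z : ℕ → Fin d → ℤ), IsPath z m ∧ z 0 = x ∧ z m = y ∧
    S = ∑ i ∈ Finset.range (m + 1), nu α (z i)}

/-- `ρ_x(r) = (max(|x|,r))^α · r`. -/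
noncomputable def rhox (α : ℝ) {d : ℕ} (x : Fin d → ℤ) (r : ℝ) : ℝ :=
  (max ((linf x : ℕ) : ℝ) r) ^ α * r

/-- `ρ_x⁻¹(r) = (max(|x|, r^{1/(1+α)}))^{-α} · r`, the inverse function of `ρ_x`. -/
noncomputable def rhoxInv (α : ℝ) {d : ℕ} (x : Fin d → ℤ) (r : ℝ) : ℝ :=
  (max ((linf x : ℕ) : ℝ) (r ^ (1 / (1 + α)))) ^ (-α) * r

/-- `V(x,r) = ν(B(x,r))`, the ν-volume of the ℓ∞-ball of radius `r` about `x`. -/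
noncomputable def V (α : ℝ) {d : ℕ} (x : Fin d → ℤ) (r : ℝ) : ℝ :=
  ∑' y : {y : Fin d → ℤ // ((linf (y - x) : ℕ) : ℝ) ≤ r}, nu α y.1

/-- `V_ρ(x,r) = ν(B_ρ(x,r))`, the ν-volume of the ρ-ball of radius `r` about `x`. -/
noncomputable def Vrho (α : ℝ) {d : ℕ} (x : Fin d → ℤ) (r : ℝ) : ℝ :=
  ∑' y : {y : Fin d → ℤ // rho α x y ≤ r}, nu α y.1

section Basic
variable {d : ℕ}

lemma coord_le_linf (x : Fin d → ℤ) (j : Fin d) : (x j).natAbs ≤ linf x :=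
  Finset.le_sup (f := fun i => (x i).natAbs) (Finset.mem_univ j)

lemma linf_le_l1 (x : Fin d → ℤ) : linf x ≤ l1 x :=
  Finset.sup_le fun j _ =>
    Finset.single_le_sum (f := fun i => (x i).natAbs) (fun i _ => Nat.zero_le _) (Finset.mem_univ j)

lemma l1_le_d_mul_linf (x : Fin d → ℤ) : l1 x ≤ d * linf x := by
  calc l1 x ≤ Finset.univ.card * linf x :=
        Finset.sum_le_card_nsmul _ _ _ (fun j _ => coord_le_linf x j)
    _ = d * linf x := by simp

lemma l1_sub_triangle (a b c : Fin d → ℤ) : l1 (a - c) ≤ l1 (a - b) + l1 (b - c) := by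
  unfold l1
  rw [← Finset.sum_add_distrib]
  refine Finset.sum_le_sum fun j _ => ?_
  simp only [Pi.sub_apply]
  omega

lemma linf_sub_le (a b : Fin d → ℤ) : linf a ≤ linf b + linf (a - b) := by
  refine Finset.sup_le fun j _ => ?_
  have h1 := coord_le_linf b j
  have h2 := coord_le_linf (a - b) j
  simp only [Pi.sub_apply] at h2
  omega

lemma linf_pos_of_ne {x y : Fin d → ℤ} (h : x ≠ y) : 1 ≤ linf (x - y) := by
  by_contra hc
  push_neg at hc
  interval_cases h' : linf (x - y)
  apply h
  funext j
  have := coord_le_linf (x - y) j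
  rw [h'] at this
  simp only [Pi.sub_apply] at this
  omega

end Basic

section Path
variable {d : ℕ} {z : ℕ → Fin d → ℤ} {m : ℕ}

lemma path_l1_le (hz : IsPath z m) : ∀ i j, i ≤ j → j ≤ m → l1 (z j - z i) ≤ j - i := by
  intro i j hij hjm
  induction j with
  | zero => interval_cases i; simp [l1]
  | succ n ih =>
    rcases Nat.eq_or_lt_of_le hij with h | h
    · subst h; simp [l1]
    · have hi : i ≤ n := by omega
      have := ih hi (by omega)
      have step : l1 (z (n+1) - z n) = 1 := hz n (by omega)
      calc l1 (z (n+1) - z i) ≤ l1 (z (n+1) - z n) + l1 (z n - z i) := l1_sub_triangle _ _ _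
        _ ≤ 1 + (n - i) := by omega
        _ ≤ n + 1 - i := by omega

end Path

section Geodesic
variable {d : ℕ} {x y : Fin d → ℤ} {z : ℕ → Fin d → ℤ} {m : ℕ}

lemma geo_ends (hz : IsPath z m) (hx : z 0 = x) (hy : z m = y) (hm : m = l1 (x - y)) :
    ∀ i ≤ m, l1 (z i - x) = i ∧ l1 (y - z i) = m - i := by
  intro i him
  have a : l1 (z i - z 0) ≤ i - 0 := path_l1_le hz 0 i (Nat.zero_le _) him
  have b : l1 (z m - z i) ≤ m - i := path_l1_le hz i m him le_rfl
  have c : l1 (z m - z 0) ≤ l1 (z m - z i) + l1 (z i - z 0) := l1_sub_triangle _ _ _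
  rw [hx, hy] at *
  have hyx : l1 (y - x) = m := by
    have : ∀ j, ((y - x) j).natAbs = ((x - y) j).natAbs := by
      intro j; simp only [Pi.sub_apply]; omega
    unfold l1 at *
    rw [Finset.sum_congr rfl fun j _ => this j]; omega
  constructor
  · omega
  · omega

lemma geo_seg (hz : IsPath z m) (hx : z 0 = x) (hy : z m = y) (hm : m = l1 (x - y)) :
    ∀ i j, i ≤ j → j ≤ m → l1 (z j - z i) = j - i := by
  intro i j hij hjm
  have a : l1 (z j - z i) ≤ j - i := path_l1_le hz i j hij hjm
  have b : l1 (z i - z 0) ≤ i - 0 := path_l1_le hz 0 i (Nat.zero_le _) (le_trans hij hjm)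
  have c : l1 (z m - z j) ≤ m - j := path_l1_le hz j m hjm le_rfl
  have t1 : l1 (z m - z 0) ≤ l1 (z m - z j) + l1 (z j - z 0) := l1_sub_triangle _ _ _
  have t2 : l1 (z j - z 0) ≤ l1 (z j - z i) + l1 (z i - z 0) := l1_sub_triangle _ _ _
  have hyx : l1 (z m - z 0) = m := by
    rw [hx, hy]
    have : ∀ jc, ((y - x) jc).natAbs = ((x - y) jc).natAbs := by
      intro jc; simp only [Pi.sub_apply]; omega
    unfold l1 at *
    rw [Finset.sum_congr rfl fun jc _ => this jc]; omega
  omega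

lemma coord_between (hz : IsPath z m) (hx : z 0 = x) (hy : z m = y) (hm : m = l1 (x - y)) :
    ∀ i ≤ m, ∀ jc : Fin d,
      (z i jc - x jc).natAbs + (z i jc - y jc).natAbs = (x jc - y jc).natAbs := by
  intro i him jc
  obtain ⟨e1, e2⟩ := geo_ends hz hx hy hm i him
  have hsum : l1 (z i - x) + l1 (y - z i) = l1 (x - y) := by omega
  have hpt : ∀ j : Fin d, ((x - y) j).natAbs ≤ ((z i - x) j).natAbs + ((y - z i) j).natAbs := by
    intro j; simp only [Pi.sub_apply]; omega
  have hsum' : ∑ j, (((z i - x) j).natAbs + ((y - z i) j).natAbs) = ∑ j, ((x - y) j).natAbs := by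
    unfold l1 at hsum; rw [Finset.sum_add_distrib]; exact hsum
  have heq : ∀ j : Fin d, ((z i - x) j).natAbs + ((y - z i) j).natAbs = ((x - y) j).natAbs := by
    by_contra hc
    push_neg at hc
    obtain ⟨j0, hj0⟩ := hc
    have hlt : ((x - y) j0).natAbs < ((z i - x) j0).natAbs + ((y - z i) j0).natAbs := by
      have := hpt j0; omega
    have : ∑ j, ((x - y) j).natAbs < ∑ j, (((z i - x) j).natAbs + ((y - z i) j).natAbs) :=
      Finset.sum_lt_sum (fun j _ => hpt j) ⟨j0, Finset.mem_univ j0, hlt⟩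
    omega
  have := heq jc
  simp only [Pi.sub_apply] at this ⊢
  omega

/-- Upper bound on `linf` along the geodesic. -/
lemma linf_le_on_geo (hz : IsPath z m) (hx : z 0 = x) (hy : z m = y) (hm : m = l1 (x - y)) :
    ∀ i ≤ m, linf (z i) ≤ linf x + linf (x - y) := by
  intro i him
  refine Finset.sup_le fun jc _ => ?_
  have hb := coord_between hz hx hy hm i him jc
  have h1 := coord_le_linf x jc
  have h2 := coord_le_linf (x - y) jc
  simp only [Pi.sub_apply] at hb h2
  omega

/-- Lower bound on `linf` along the geodesic. -/
lemma linf_ge_on_geo (hd : 1 ≤ d) (hz : IsPath z m) (hx : z 0 = x) (hy : z m = y)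
    (hm : m = l1 (x - y)) :
    ∀ i ≤ m, linf x ≤ linf (z i) + linf (x - y) := by
  intro i him
  obtain ⟨j, _, hj⟩ := Finset.exists_mem_eq_sup (Finset.univ : Finset (Fin d))
    (Finset.univ_nonempty_iff.2 (Fin.pos_iff_nonempty.1 hd)) (fun i => (x i).natAbs)
  have hb := coord_between hz hx hy hm i him j
  have h2 := coord_le_linf (x - y) j
  have h3 := coord_le_linf (z i) j
  simp only [Pi.sub_apply] at hb h2
  have hj' : linf x = (x j).natAbs := hj
  omega

end Geodesic

section Rpow
open Real

lemma rpow_mem_bound {α u v a : ℝ} (hu : 0 < u) (hua : u ≤ a) (hav : a ≤ v) :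
    min (u ^ α) (v ^ α) ≤ a ^ α ∧ a ^ α ≤ max (u ^ α) (v ^ α) := by
  rcases le_or_gt 0 α with hα | hα
  · constructor
    · exact le_trans (min_le_left _ _) (Real.rpow_le_rpow hu.le hua hα)
    · exact le_trans (Real.rpow_le_rpow (by linarith) hav hα) (le_max_right _ _)
  · constructor
    · exact le_trans (min_le_right _ _) (Real.rpow_le_rpow_of_nonpos (by linarith) hav hα.le)
    · exact le_trans (Real.rpow_le_rpow_of_nonpos hu hua hα.le) (le_max_left _ _)

end Rpow

section Count
variable {d : ℕ} {x y : Fin d → ℤ} {z : ℕ → Fin d → ℤ} {m : ℕ}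

lemma count_small (hd : 1 ≤ d) (hz : IsPath z m) (hx : z 0 = x) (hy : z m = y)
    (hm : m = l1 (x - y)) (k : ℕ) :
    ((Finset.range (m + 1)).filter (fun i => max (linf (z i)) 1 ≤ k)).card ≤ 2 * d * k + 1 := by
  set s := (Finset.range (m + 1)).filter (fun i => max (linf (z i)) 1 ≤ k) with hs
  rcases Finset.eq_empty_or_nonempty s with h | h
  · simp [h]
  · set i0 := s.min' h
    set i1 := s.max' h
    have hi0 : i0 ∈ s := s.min'_mem h
    have hi1 : i1 ∈ s := s.max'_mem h
    have hsub : s ⊆ Finset.Icc i0 i1 := fun i hi =>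
      Finset.mem_Icc.2 ⟨s.min'_le i hi, s.le_max' i hi⟩
    have hcard : s.card ≤ i1 - i0 + 1 := by
      have := Finset.card_le_card hsub
      rwa [Nat.card_Icc, Nat.succ_sub (s.min'_le i1 hi1)] at this
    have hi0m : i0 ≤ m := by
      have := (Finset.mem_filter.1 hi0).1; rw [Finset.mem_range] at this; omega
    have hi1m : i1 ≤ m := by
      have := (Finset.mem_filter.1 hi1).1; rw [Finset.mem_range] at this; omega
    have hseg : l1 (z i1 - z i0) = i1 - i0 := geo_seg hz hx hy hm i0 i1 (s.min'_le i1 hi1) hi1m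
    have h0 : linf (z i0) ≤ k := by have := (Finset.mem_filter.1 hi0).2; omega
    have h1 : linf (z i1) ≤ k := by have := (Finset.mem_filter.1 hi1).2; omega
    have htri : linf (z i1 - z i0) ≤ linf (z i1) + linf (z i0) := by
      have := linf_sub_le (z i1 - z i0) (z i1)
      refine le_trans this ?_
      have : linf (z i1 - z i0 - z i1) = linf (z i0) := by
        have : ∀ j, ((z i1 - z i0 - z i1) j).natAbs = ((z i0) j).natAbs := by
          intro j; simp only [Pi.sub_apply]; omega
        unfold linf
        exact Finset.sup_congr rfl fun j _ => this j
      omega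
    have hl1 : l1 (z i1 - z i0) ≤ d * (2 * k) := by
      calc l1 (z i1 - z i0) ≤ d * linf (z i1 - z i0) := l1_le_d_mul_linf _
        _ ≤ d * (2 * k) := Nat.mul_le_mul_left d (by omega)
    have hrw : d * (2 * k) = 2 * d * k := by ring
    omega

end Count

section Dyadic
open Real

lemma two_rpow_pos (β : ℝ) : (0:ℝ) < (2:ℝ) ^ β := Real.rpow_pos_of_pos two_pos β

lemma q_gt_one {α : ℝ} (hα : -1 < α) : 1 < (2:ℝ) ^ (1 + α) :=
  Real.one_lt_rpow_iff_of_pos two_pos |>.2 (Or.inl ⟨one_lt_two, by linarith⟩)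

lemma dyadic_sum (d : ℕ) (hd : 1 ≤ d) (α : ℝ) (hα : -1 < α) (m : ℕ) (z : ℕ → Fin d → ℤ)
    (hcount : ∀ k : ℕ,
      ((Finset.range (m + 1)).filter (fun i => max (linf (z i)) 1 ≤ k)).card ≤ 2 * d * k + 1)
    (M : ℕ) (hM1 : 1 ≤ M) (hM : ∀ i ∈ Finset.range (m + 1), max (linf (z i)) 1 ≤ M) :
    ∑ i ∈ Finset.range (m + 1), nu α (z i) ≤
      (5 * d * ((2:ℝ) ^ α + 1) * (2:ℝ) ^ (1 + α) / ((2:ℝ) ^ (1 + α) - 1)) * (M:ℝ) ^ (1 + α) := by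
  set q : ℝ := (2:ℝ) ^ (1 + α) with hq
  have hq1 : 1 < q := q_gt_one hα
  set A : ℝ := 5 * d * ((2:ℝ) ^ α + 1) with hA
  have hApos : 0 < A := by
    have := two_rpow_pos α
    have hd' : (1:ℝ) ≤ d := by exact_mod_cast hd
    positivity
  set T := Nat.log 2 M with hT
  set g : ℕ → ℕ := fun i => Nat.log 2 (max (linf (z i)) 1) with hg
  have hmaps : ∀ i ∈ Finset.range (m + 1), g i ∈ Finset.range (T + 1) := by
    intro i hi
    exact Finset.mem_range.2 (Nat.lt_succ_of_le (Nat.log_mono_right (hM i hi)))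
  rw [← Finset.sum_fiberwise_of_maps_to hmaps]
  have fiber_bound : ∀ t ∈ Finset.range (T + 1),
      ∑ i ∈ (Finset.range (m + 1)).filter (fun i => g i = t), nu α (z i) ≤ A * q ^ t := by
    intro t _
    set b : ℝ := (2:ℝ) ^ (t : ℕ) with hb
    have hbpos : (0:ℝ) < b := by positivity
    have hterm : ∀ i ∈ (Finset.range (m + 1)).filter (fun i => g i = t),
        nu α (z i) ≤ ((2:ℝ) ^ α + 1) * b ^ α := by
      intro i hi
      have hgi : g i = t := (Finset.mem_filter.1 hi).2
      set k := max (linf (z i)) 1 with hk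
      have hk0 : k ≠ 0 := by omega
      have hlo : 2 ^ t ≤ k := by
        rw [← hgi]; exact Nat.pow_log_le_self 2 hk0
      have hhi : k < 2 ^ (t + 1) := by
        rw [← hgi]; exact Nat.lt_pow_succ_log_self one_lt_two k
      have hlo' : b ≤ (k:ℝ) := by
        rw [hb]; exact_mod_cast Nat.cast_le.2 hlo
      have hhi' : (k:ℝ) ≤ 2 * b := by
        have : (k:ℝ) ≤ ((2 ^ (t+1) : ℕ) : ℝ) := Nat.cast_le.2 hhi.le
        rw [hb]; push_cast [pow_succ] at this ⊢; linarith
      show ((k:ℕ):ℝ) ^ α ≤ ((2:ℝ) ^ α + 1) * b ^ α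
      have hbα : (0:ℝ) < b ^ α := Real.rpow_pos_of_pos hbpos α
      rcases le_or_gt 0 α with h0 | h0
      · have h1 : ((k:ℕ):ℝ) ^ α ≤ (2 * b) ^ α :=
          Real.rpow_le_rpow (by positivity) hhi' h0
        have h2 : (2 * b) ^ α = (2:ℝ) ^ α * b ^ α :=
          Real.mul_rpow (by norm_num) hbpos.le
        nlinarith
      · have h1 : ((k:ℕ):ℝ) ^ α ≤ b ^ α :=
          Real.rpow_le_rpow_of_nonpos hbpos hlo' h0.le
        nlinarith [Real.rpow_pos_of_pos (two_pos (α := ℝ)) α]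
    have hcard : (((Finset.range (m + 1)).filter (fun i => g i = t)).card : ℝ) ≤ 5 * d * b := by
      have hsub : (Finset.range (m + 1)).filter (fun i => g i = t) ⊆
          (Finset.range (m + 1)).filter (fun i => max (linf (z i)) 1 ≤ 2 ^ (t + 1)) := by
        intro i hi
        obtain ⟨hi1, hi2⟩ := Finset.mem_filter.1 hi
        refine Finset.mem_filter.2 ⟨hi1, ?_⟩
        have h := Nat.lt_pow_succ_log_self one_lt_two (max (linf (z i)) 1)
        simp only [hg] at hi2
        rw [hi2] at h
        omega
      have h1 : ((Finset.range (m + 1)).filter (fun i => g i = t)).card ≤ 2 * d * 2 ^ (t + 1) + 1 :=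
        le_trans (Finset.card_le_card hsub) (hcount (2 ^ (t + 1)))
      have h2 : 2 * d * 2 ^ (t + 1) + 1 ≤ 5 * d * 2 ^ t := by
        have h3 : 1 ≤ d * 2 ^ t := Nat.one_le_iff_ne_zero.2 (by positivity)
        calc 2 * d * 2 ^ (t + 1) + 1 = 4 * (d * 2 ^ t) + 1 := by ring
          _ ≤ 5 * (d * 2 ^ t) := by omega
          _ = 5 * d * 2 ^ t := by ring
      have : (((Finset.range (m + 1)).filter (fun i => g i = t)).card : ℝ) ≤
          ((5 * d * 2 ^ t : ℕ) : ℝ) := Nat.cast_le.2 (le_trans h1 h2)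
      rw [hb]; push_cast at this ⊢; linarith
    calc ∑ i ∈ (Finset.range (m + 1)).filter (fun i => g i = t), nu α (z i)
        ≤ (((Finset.range (m + 1)).filter (fun i => g i = t)).card : ℝ) *
            (((2:ℝ) ^ α + 1) * b ^ α) := by
          have := Finset.sum_le_card_nsmul _ _ _ hterm
          simpa [nsmul_eq_mul] using this
      _ ≤ (5 * d * b) * (((2:ℝ) ^ α + 1) * b ^ α) := by
          have hB : (0:ℝ) ≤ ((2:ℝ) ^ α + 1) * b ^ α := by
            have := two_rpow_pos α
            have := Real.rpow_pos_of_pos hbpos α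
            positivity
          exact mul_le_mul_of_nonneg_right hcard hB
      _ = A * (b * b ^ α) := by ring
      _ = A * q ^ t := by
          congr 1
          have h1 : b * b ^ α = b ^ (1 + α) := by
            rw [Real.rpow_add hbpos, Real.rpow_one]
          rw [h1, hb, hq]
          rw [← Real.rpow_natCast (2:ℝ) t, ← Real.rpow_natCast ((2:ℝ) ^ (1+α)) t,
            ← Real.rpow_mul (by norm_num), ← Real.rpow_mul (by norm_num)]
          ring_nf
  calc ∑ t ∈ Finset.range (T + 1),
        ∑ i ∈ (Finset.range (m + 1)).filter (fun i => g i = t), nu α (z i)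
      ≤ ∑ t ∈ Finset.range (T + 1), A * q ^ t := Finset.sum_le_sum fiber_bound
    _ = A * ((q ^ (T + 1) - 1) / (q - 1)) := by
        rw [← Finset.mul_sum, geom_sum_eq (ne_of_gt hq1)]
    _ ≤ A * ((q * (M:ℝ) ^ (1 + α)) / (q - 1)) := by
        have hq0 : (0:ℝ) < q - 1 := by linarith
        have hqT : q ^ (T + 1) ≤ q * (M:ℝ) ^ (1 + α) := by
          have h2T : ((2:ℝ)) ^ (T + 1 : ℕ) ≤ 2 * (M:ℝ) := by
            have h : (2:ℕ) ^ (T + 1) ≤ 2 * M := by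
              have := Nat.pow_log_le_self 2 (show M ≠ 0 by omega)
              rw [pow_succ]
              calc 2 ^ T * 2 = 2 * 2 ^ T := by ring
                _ ≤ 2 * M := by rw [← hT] at *; omega
            exact_mod_cast h
          have hcast : q ^ (T + 1) = ((2:ℝ) ^ (T + 1 : ℕ)) ^ (1 + α) := by
            rw [hq]
            rw [← Real.rpow_natCast ((2:ℝ) ^ (1+α)) (T+1), ← Real.rpow_natCast (2:ℝ) (T+1),
              ← Real.rpow_mul (by norm_num), ← Real.rpow_mul (by norm_num)]
            ring_nf
          rw [hcast]
          calc ((2:ℝ) ^ (T + 1 : ℕ)) ^ (1 + α) ≤ (2 * (M:ℝ)) ^ (1 + α) :=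
              Real.rpow_le_rpow (by positivity) h2T (by linarith)
            _ = q * (M:ℝ) ^ (1 + α) := by
                rw [Real.mul_rpow (by norm_num) (by positivity), hq]
        have hq0' : 0 ≤ A := hApos.le
        exact mul_le_mul_of_nonneg_left ((div_le_div_iff_of_pos_right hq0).2 (by linarith)) hq0'
    _ = (A * q / (q - 1)) * (M:ℝ) ^ (1 + α) := by ring
    _ = (5 * d * ((2:ℝ) ^ α + 1) * (2:ℝ) ^ (1 + α) / ((2:ℝ) ^ (1 + α) - 1)) * (M:ℝ) ^ (1 + α) := by
        rw [hA, hq]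

end Dyadic

section IVT

lemma int_ivt_mono (w : ℕ → ℤ) (m : ℕ) (h : ∀ i < m, (w (i + 1) - w i).natAbs ≤ 1)
    (v : ℤ) (h1 : w 0 ≤ v) (h2 : v ≤ w m) : ∃ i, i ≤ m ∧ w i = v := by
  set s := (Finset.range (m + 1)).filter (fun i => w i ≤ v) with hs
  have h0 : (0 : ℕ) ∈ s := Finset.mem_filter.2 ⟨Finset.mem_range.2 (by omega), h1⟩
  have hne : s.Nonempty := ⟨0, h0⟩
  set i0 := s.max' hne with hi0
  have hi0s : i0 ∈ s := s.max'_mem hne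
  obtain ⟨hi0r, hi0v⟩ := Finset.mem_filter.1 hi0s
  rw [Finset.mem_range] at hi0r
  rcases Nat.eq_or_lt_of_le (show i0 ≤ m by omega) with he | hlt
  · refine ⟨i0, le_of_eq he, ?_⟩
    rw [he] at hi0v ⊢
    omega
  · have hnext : ¬ (w (i0 + 1) ≤ v) := by
      intro hc
      have : i0 + 1 ∈ s := Finset.mem_filter.2 ⟨Finset.mem_range.2 (by omega), hc⟩
      have := s.le_max' _ this
      omega
    push_neg at hnext
    have hstep := h i0 hlt
    refine ⟨i0, by omega, by omega⟩

lemma int_ivt (w : ℕ → ℤ) (m : ℕ) (h : ∀ i < m, (w (i + 1) - w i).natAbs ≤ 1)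
    (v : ℤ) (h1 : min (w 0) (w m) ≤ v) (h2 : v ≤ max (w 0) (w m)) : ∃ i, i ≤ m ∧ w i = v := by
  rcases le_total (w 0) (w m) with hc | hc
  · exact int_ivt_mono w m h v (by omega) (by omega)
  · have h' : ∀ i < m, ((-w) (i + 1) - (-w) i).natAbs ≤ 1 := by
      intro i hi
      have := h i hi
      simp only [Pi.neg_apply]
      omega
    obtain ⟨i, him, hw⟩ := int_ivt_mono (-w) m h' (-v)
      (by simp only [Pi.neg_apply]; omega) (by simp only [Pi.neg_apply]; omega)
    exact ⟨i, him, by simp only [Pi.neg_apply] at hw; omega⟩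

end IVT

section Main
open Real

lemma nu_nonneg (α : ℝ) {d : ℕ} (x : Fin d → ℤ) : 0 ≤ nu α x := by
  unfold nu
  have : (0:ℝ) < ((max (linf x) 1 : ℕ) : ℝ) := by
    have : 1 ≤ max (linf x) 1 := le_max_right _ _
    exact_mod_cast Nat.lt_of_lt_of_le Nat.zero_lt_one this
  exact (Real.rpow_pos_of_pos this α).le

lemma nu_eq (α : ℝ) {d : ℕ} (x : Fin d → ℤ) :
    nu α x = ((max (linf x) 1 : ℕ) : ℝ) ^ α := rfl

lemma kcast_pos (α : ℝ) {d : ℕ} (x : Fin d → ℤ) : (0:ℝ) < ((max (linf x) 1 : ℕ) : ℝ) := by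
  have : 1 ≤ max (linf x) 1 := le_max_right _ _
  exact_mod_cast Nat.lt_of_lt_of_le Nat.zero_lt_one this

lemma lower_bound (d : ℕ) (hd : 1 ≤ d) (α : ℝ) (hα : -1 < α) :
    ∃ k : ℝ, 0 < k ∧
      ∀ x y : Fin d → ℤ, x ≠ y →
        ∀ (m : ℕ) (z : ℕ → Fin d → ℤ), IsPath z m → z 0 = x → z m = y →
          m = l1 (x - y) →
          k * rhox α x ((linf (x - y) : ℕ) : ℝ) ≤ ∑ i ∈ Finset.range (m + 1), nu α (z i) := by
  classical
  set c0 : ℝ := min ((2:ℝ) ^ (-α)) ((2:ℝ) ^ α) with hc0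
  set k2 : ℝ := min ((3:ℝ) ^ α) ((4:ℝ) ^ (-α) / 2) with hk2
  set k : ℝ := min c0 (k2 * (max 1 ((2:ℝ) ^ α))⁻¹) with hk
  have hc0pos : 0 < c0 := lt_min (Real.rpow_pos_of_pos two_pos _) (Real.rpow_pos_of_pos two_pos _)
  have hk2pos : 0 < k2 := lt_min (Real.rpow_pos_of_pos (by norm_num) _)
    (by have := Real.rpow_pos_of_pos (show (0:ℝ) < 4 by norm_num) (-α); linarith)
  have hmaxpos : (0:ℝ) < max 1 ((2:ℝ) ^ α) := lt_max_of_lt_left one_pos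
  have hkpos : 0 < k := lt_min hc0pos (by positivity)
  refine ⟨k, hkpos, ?_⟩
  intro x y hxy m z hz hx hy hm
  set X := linf x with hX
  set r := linf (x - y) with hr
  have hr1 : 1 ≤ r := linf_pos_of_ne hxy
  have hrm : r ≤ m := by rw [hm]; exact linf_le_l1 _
  have hrpos : (0:ℝ) < (r:ℝ) := by exact_mod_cast hr1
  have hrhox : rhox α x ((r:ℕ):ℝ) = (max ((X:ℕ):ℝ) ((r:ℕ):ℝ)) ^ α * ((r:ℕ):ℝ) := rfl
  rcases le_or_gt (2 * r) X with hc | hc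
  · -- far case : X ≥ 2r
    have hXpos : (0:ℝ) < (X:ℝ) := by
      have : 2 ≤ X := by omega
      exact_mod_cast by omega
    have hmax : max ((X:ℕ):ℝ) ((r:ℕ):ℝ) = (X:ℝ) := by
      apply max_eq_left
      exact_mod_cast by omega
    have hterm : ∀ i ∈ Finset.range (m + 1), c0 * (X:ℝ) ^ α ≤ nu α (z i) := by
      intro i hi
      rw [Finset.mem_range] at hi
      have him : i ≤ m := by omega
      have hlo := linf_ge_on_geo hd hz hx hy hm i him
      have hhi := linf_le_on_geo hz hx hy hm i him
      set ki := max (linf (z i)) 1 with hki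
      have hlo' : X ≤ ki + r := by omega
      have hhi' : ki ≤ X + r := by omega
      have hlor : (X:ℝ) / 2 ≤ (ki:ℝ) := by
        have : 2 * ki ≥ X := by omega
        have := (Nat.cast_le (α := ℝ)).2 this
        push_cast at this
        linarith
      have hhir : (ki:ℝ) ≤ 2 * (X:ℝ) := by
        have : ki ≤ 2 * X := by omega
        have := (Nat.cast_le (α := ℝ)).2 this
        push_cast at this
        linarith
      have hb := rpow_mem_bound (α := α) (by positivity : (0:ℝ) < (X:ℝ)/2) hlor hhir
      have hXα : (0:ℝ) < (X:ℝ) ^ α := Real.rpow_pos_of_pos hXpos α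
      have e1 : ((X:ℝ)/2) ^ α = (2:ℝ) ^ (-α) * (X:ℝ) ^ α := by
        rw [Real.div_rpow hXpos.le (by norm_num : (0:ℝ) ≤ 2),
          Real.rpow_neg (by norm_num : (0:ℝ) ≤ 2)]
        ring
      have e2 : (2 * (X:ℝ)) ^ α = (2:ℝ) ^ α * (X:ℝ) ^ α := Real.mul_rpow (by norm_num) hXpos.le
      have hmin : c0 * (X:ℝ) ^ α ≤ min (((X:ℝ)/2) ^ α) ((2 * (X:ℝ)) ^ α) := by
        apply le_min
        · rw [e1]
          exact mul_le_mul_of_nonneg_right (min_le_left _ _) hXα.le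
        · rw [e2]
          exact mul_le_mul_of_nonneg_right (min_le_right _ _) hXα.le
      exact le_trans hmin hb.1
    have hsum : ((m + 1 : ℕ):ℝ) * (c0 * (X:ℝ) ^ α) ≤ ∑ i ∈ Finset.range (m + 1), nu α (z i) := by
      have := Finset.card_nsmul_le_sum (Finset.range (m + 1)) _ _ hterm
      simpa [nsmul_eq_mul] using this
    rw [hrhox, hmax]
    have hm1 : (r:ℝ) ≤ ((m + 1 : ℕ):ℝ) := by exact_mod_cast by omega
    have hXα : (0:ℝ) < (X:ℝ) ^ α := Real.rpow_pos_of_pos hXpos α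
    have h1 : k * ((X:ℝ) ^ α * (r:ℝ)) ≤ c0 * ((X:ℝ) ^ α * (r:ℝ)) := by
      apply mul_le_mul_of_nonneg_right (min_le_left _ _)
      positivity
    calc k * ((X:ℝ) ^ α * (r:ℝ)) ≤ c0 * ((X:ℝ) ^ α * (r:ℝ)) := h1
      _ ≤ ((m + 1 : ℕ):ℝ) * (c0 * (X:ℝ) ^ α) := by
          have h2 := mul_le_mul_of_nonneg_left hm1 (mul_pos hc0pos hXα).le
          nlinarith [h2]
      _ ≤ _ := hsum
  · -- near case : X < 2r
    have hρle : rhox α x ((r:ℕ):ℝ) ≤ max 1 ((2:ℝ) ^ α) * ((r:ℝ) ^ α * (r:ℝ)) := by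
      rw [hrhox]
      have hmem : (r:ℝ) ≤ max ((X:ℕ):ℝ) ((r:ℕ):ℝ) := le_max_right _ _
      have hmem2 : max ((X:ℕ):ℝ) ((r:ℕ):ℝ) ≤ 2 * (r:ℝ) := by
        apply max_le
        · exact_mod_cast by push_cast; exact_mod_cast Nat.cast_le.2 hc.le
        · linarith
      have hb := rpow_mem_bound (α := α) hrpos hmem hmem2
      have e2 : (2 * (r:ℝ)) ^ α = (2:ℝ) ^ α * (r:ℝ) ^ α := Real.mul_rpow (by norm_num) hrpos.le
      have hrα : (0:ℝ) < (r:ℝ) ^ α := Real.rpow_pos_of_pos hrpos α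
      have : (max ((X:ℕ):ℝ) ((r:ℕ):ℝ)) ^ α ≤ max 1 ((2:ℝ) ^ α) * (r:ℝ) ^ α := by
        refine le_trans hb.2 (max_le ?_ ?_)
        · have : (1:ℝ) ≤ max 1 ((2:ℝ) ^ α) := le_max_left _ _
          nlinarith
        · rw [e2]
          exact mul_le_mul_of_nonneg_right (le_max_right _ _) hrα.le
      nlinarith
    have hkey : k2 * ((r:ℝ) ^ α * (r:ℝ)) ≤ ∑ i ∈ Finset.range (m + 1), nu α (z i) := by
      have hrα : (0:ℝ) ≤ (r:ℝ) ^ α := (Real.rpow_pos_of_pos hrpos α).le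
      rcases le_or_gt α 0 with hα0 | hα0
      · -- α ≤ 0 : every vertex weight is at least (3r)^α
        have hterm : ∀ i ∈ Finset.range (m + 1), (3 * (r:ℝ)) ^ α ≤ nu α (z i) := by
          intro i hi
          rw [Finset.mem_range] at hi
          have him : i ≤ m := by omega
          have hhi := linf_le_on_geo hz hx hy hm i him
          have h3 : max (linf (z i)) 1 ≤ 3 * r := by omega
          have h3' : ((max (linf (z i)) 1 : ℕ):ℝ) ≤ 3 * (r:ℝ) := by exact_mod_cast h3
          exact Real.rpow_le_rpow_of_nonpos (kcast_pos α (z i)) h3' hα0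
        have hsum : ((m + 1 : ℕ):ℝ) * ((3 * (r:ℝ)) ^ α) ≤
            ∑ i ∈ Finset.range (m + 1), nu α (z i) := by
          have := Finset.card_nsmul_le_sum (Finset.range (m + 1)) _ _ hterm
          simpa [nsmul_eq_mul] using this
        have hm1 : (r:ℝ) ≤ ((m + 1 : ℕ):ℝ) := by exact_mod_cast by omega
        have h3α : (3 * (r:ℝ)) ^ α = (3:ℝ) ^ α * (r:ℝ) ^ α :=
          Real.mul_rpow (by norm_num) hrpos.le
        have h3pos : (0:ℝ) ≤ (3 * (r:ℝ)) ^ α := Real.rpow_nonneg (by positivity) α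
        calc k2 * ((r:ℝ) ^ α * (r:ℝ)) ≤ (3:ℝ) ^ α * ((r:ℝ) ^ α * (r:ℝ)) := by
              apply mul_le_mul_of_nonneg_right (min_le_left _ _)
              positivity
          _ = (r:ℝ) * ((3 * (r:ℝ)) ^ α) := by rw [h3α]; ring
          _ ≤ ((m + 1 : ℕ):ℝ) * ((3 * (r:ℝ)) ^ α) := mul_le_mul_of_nonneg_right hm1 h3pos
          _ ≤ _ := hsum
      · -- α > 0 : intermediate value argument on a maximal coordinate
        obtain ⟨j, _, hj⟩ := Finset.exists_mem_eq_sup (Finset.univ : Finset (Fin d))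
          (Finset.univ_nonempty_iff.2 (Fin.pos_iff_nonempty.1 hd))
          (fun i => ((x - y) i).natAbs)
        have hj' : ((x - y) j).natAbs = r := hj.symm
        simp only [Pi.sub_apply] at hj'
        set a : ℤ := min (x j) (y j) with ha
        set b : ℤ := max (x j) (y j) with hb
        set q : ℕ := r / 4 + 1 with hq
        set w : ℕ → ℤ := fun i => z i j with hwdef
        have hstep : ∀ i < m, (w (i + 1) - w i).natAbs ≤ 1 := by
          intro i hi
          have h1 := hz i hi
          have h2 : ((z (i + 1) - z i) j).natAbs ≤ l1 (z (i + 1) - z i) :=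
            le_trans (coord_le_linf _ j) (linf_le_l1 _)
          simp only [Pi.sub_apply] at h2
          simp only [hwdef]
          omega
        have hw0 : w 0 = x j := by simp only [hwdef, hx]
        have hwm : w m = y j := by simp only [hwdef, hy]
        set good := (Finset.Icc a b).filter (fun v => q ≤ v.natAbs) with hgood
        have hIcc_card : (Finset.Icc a b).card = r + 1 := by
          rw [Int.card_Icc]
          omega
        have hbadsub : (Finset.Icc a b).filter (fun v => ¬ q ≤ v.natAbs) ⊆
            Finset.Icc (-(q:ℤ) + 1) ((q:ℤ) - 1) := by
          intro v hv
          have h2 := (Finset.mem_filter.1 hv).2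
          rw [Finset.mem_Icc]
          omega
        have hbadcard : ((Finset.Icc a b).filter (fun v => ¬ q ≤ v.natAbs)).card ≤ 2 * q - 1 := by
          have := Finset.card_le_card hbadsub
          rw [Int.card_Icc] at this
          omega
        have hsplit := Finset.card_filter_add_card_filter_not
          (s := Finset.Icc a b) (p := fun v => q ≤ v.natAbs)
        have hgoodcard : r + 1 ≤ good.card + (2 * q - 1) := by
          rw [hgood]
          omega
        have hexists : ∀ v ∈ good, ∃ i, i ≤ m ∧ w i = v := by
          intro v hv
          have hvIcc := (Finset.mem_filter.1 hv).1
          rw [Finset.mem_Icc] at hvIcc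
          apply int_ivt w m hstep v
          · rw [hw0, hwm]; omega
          · rw [hw0, hwm]; omega
        set F : ℤ → ℕ := fun v => if h : ∃ i, i ≤ m ∧ w i = v then h.choose else 0 with hF
        have hFspec : ∀ v ∈ good, F v ≤ m ∧ w (F v) = v := by
          intro v hv
          obtain ⟨i, hi⟩ := hexists v hv
          simp only [hF]
          rw [dif_pos ⟨i, hi⟩]
          exact (⟨i, hi⟩ : ∃ i, i ≤ m ∧ w i = v).choose_spec
        set t := (Finset.range (m + 1)).filter (fun i => q ≤ (z i j).natAbs) with ht
        have hmapsF : ∀ v ∈ good, F v ∈ t := by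
          intro v hv
          obtain ⟨h1, h2⟩ := hFspec v hv
          refine Finset.mem_filter.2 ⟨Finset.mem_range.2 (by omega), ?_⟩
          have h3 := (Finset.mem_filter.1 hv).2
          simp only [hwdef] at h2
          rw [h2]
          exact h3
        have hinjF : Set.InjOn F good := by
          intro v1 h1 v2 h2 he
          have e1 := (hFspec v1 h1).2
          have e2 := (hFspec v2 h2).2
          rw [he] at e1
          rw [e1] at e2
          exact e2
        have hcardle : good.card ≤ t.card := Finset.card_le_card_of_injOn F hmapsF hinjF
        have hq4 : (r:ℝ) / 4 ≤ (q:ℝ) := by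
          have h : r ≤ 4 * q := by omega
          have h' : (r:ℝ) ≤ 4 * (q:ℝ) := by exact_mod_cast h
          linarith
        have hterm : ∀ i ∈ t, ((r:ℝ) / 4) ^ α ≤ nu α (z i) := by
          intro i hi
          have hi2 := (Finset.mem_filter.1 hi).2
          have h1 : q ≤ max (linf (z i)) 1 :=
            le_trans hi2 (le_trans (coord_le_linf _ j) (le_max_left _ _))
          have h1' : ((r:ℝ) / 4) ≤ ((max (linf (z i)) 1 : ℕ):ℝ) :=
            le_trans hq4 (by exact_mod_cast h1)
          exact Real.rpow_le_rpow (by positivity) h1' hα0.le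
        have hsum2 : ((t.card : ℕ):ℝ) * (((r:ℝ) / 4) ^ α) ≤ ∑ i ∈ t, nu α (z i) := by
          have := Finset.card_nsmul_le_sum t _ _ hterm
          simpa [nsmul_eq_mul] using this
        have hsub : t ⊆ Finset.range (m + 1) := Finset.filter_subset _ _
        have hsumall : ∑ i ∈ t, nu α (z i) ≤ ∑ i ∈ Finset.range (m + 1), nu α (z i) :=
          Finset.sum_le_sum_of_subset_of_nonneg hsub (fun i _ _ => nu_nonneg α (z i))
        have hcg : (r:ℝ) / 2 ≤ (good.card : ℝ) := by
          have h2 : r ≤ 2 * good.card := by omega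
          have := (Nat.cast_le (α := ℝ)).2 h2
          push_cast at this
          linarith
        have hr4α : (0:ℝ) ≤ ((r:ℝ) / 4) ^ α := Real.rpow_nonneg (by positivity) α
        have h4α : ((r:ℝ) / 4) ^ α = (4:ℝ) ^ (-α) * (r:ℝ) ^ α := by
          rw [Real.div_rpow hrpos.le (by norm_num : (0:ℝ) ≤ 4),
            Real.rpow_neg (by norm_num : (0:ℝ) ≤ 4)]
          ring
        calc k2 * ((r:ℝ) ^ α * (r:ℝ)) ≤ ((4:ℝ) ^ (-α) / 2) * ((r:ℝ) ^ α * (r:ℝ)) := by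
              apply mul_le_mul_of_nonneg_right (min_le_right _ _)
              positivity
          _ = ((r:ℝ) / 2) * (((r:ℝ) / 4) ^ α) := by rw [h4α]; ring
          _ ≤ (good.card : ℝ) * (((r:ℝ) / 4) ^ α) := mul_le_mul_of_nonneg_right hcg hr4α
          _ ≤ ((t.card : ℕ):ℝ) * (((r:ℝ) / 4) ^ α) := by
              apply mul_le_mul_of_nonneg_right _ hr4α
              exact_mod_cast hcardle
          _ ≤ ∑ i ∈ t, nu α (z i) := hsum2
          _ ≤ _ := hsumall
    have hrα : (0:ℝ) < (r:ℝ) ^ α := Real.rpow_pos_of_pos hrpos α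
    calc k * rhox α x ((r:ℕ):ℝ)
        ≤ (k2 * (max 1 ((2:ℝ) ^ α))⁻¹) * (max 1 ((2:ℝ) ^ α) * ((r:ℝ) ^ α * (r:ℝ))) := by
          apply mul_le_mul (min_le_right _ _) hρle ?_ ?_
          · unfold rhox
            have h0 : (0:ℝ) < max ((linf x:ℕ):ℝ) ((r:ℕ):ℝ) := lt_max_of_lt_right hrpos
            positivity
          · positivity
      _ = k2 * ((r:ℝ) ^ α * (r:ℝ)) := by
          field_simp
      _ ≤ _ := hkey

end Main

section Upper
open Real

lemma upper_bound (d : ℕ) (hd : 1 ≤ d) (α : ℝ) (hα : -1 < α) :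
    ∃ K : ℝ, 0 < K ∧
      ∀ x y : Fin d → ℤ, x ≠ y →
        ∀ (m : ℕ) (z : ℕ → Fin d → ℤ), IsPath z m → z 0 = x → z m = y →
          m = l1 (x - y) →
          ∑ i ∈ Finset.range (m + 1), nu α (z i) ≤ K * rhox α x ((linf (x - y) : ℕ) : ℝ) := by
  classical
  set c1 : ℝ := max ((2:ℝ) ^ (-α)) ((2:ℝ) ^ α) with hc1
  set C2 : ℝ := 5 * d * ((2:ℝ) ^ α + 1) * (2:ℝ) ^ (1 + α) / ((2:ℝ) ^ (1 + α) - 1) with hC2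
  have hq1 : 1 < (2:ℝ) ^ (1 + α) := q_gt_one hα
  have hc1pos : 0 < c1 := lt_max_of_lt_left (Real.rpow_pos_of_pos two_pos _)
  have hC2pos : 0 < C2 := by
    rw [hC2]
    have h1 : (0:ℝ) < (2:ℝ) ^ α := Real.rpow_pos_of_pos two_pos _
    have h2 : (0:ℝ) < (2:ℝ) ^ (1 + α) := Real.rpow_pos_of_pos two_pos _
    have hd' : (1:ℝ) ≤ d := by exact_mod_cast hd
    have h3 : (0:ℝ) < (2:ℝ) ^ (1 + α) - 1 := by linarith
    positivity
  set K : ℝ := max (2 * d * c1) (C2 * (3:ℝ) ^ (1 + α) * (min 1 ((2:ℝ) ^ α))⁻¹) with hK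
  have hminpos : (0:ℝ) < min 1 ((2:ℝ) ^ α) :=
    lt_min one_pos (Real.rpow_pos_of_pos two_pos _)
  have hKpos : 0 < K := by
    apply lt_max_of_lt_right
    positivity
  refine ⟨K, hKpos, ?_⟩
  intro x y hxy m z hz hx hy hm
  set X := linf x with hX
  set r := linf (x - y) with hr
  have hr1 : 1 ≤ r := linf_pos_of_ne hxy
  have hrpos : (0:ℝ) < (r:ℝ) := by exact_mod_cast hr1
  have hmd : m ≤ d * r := by rw [hm]; exact l1_le_d_mul_linf _
  have hrhox : rhox α x ((r:ℕ):ℝ) = (max ((X:ℕ):ℝ) ((r:ℕ):ℝ)) ^ α * ((r:ℕ):ℝ) := rfl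
  rcases le_or_gt (2 * r) X with hc | hc
  · -- far case
    have hXpos : (0:ℝ) < (X:ℝ) := by exact_mod_cast by omega
    have hmax : max ((X:ℕ):ℝ) ((r:ℕ):ℝ) = (X:ℝ) := max_eq_left (by exact_mod_cast by omega)
    have hXα : (0:ℝ) < (X:ℝ) ^ α := Real.rpow_pos_of_pos hXpos α
    have hterm : ∀ i ∈ Finset.range (m + 1), nu α (z i) ≤ c1 * (X:ℝ) ^ α := by
      intro i hi
      rw [Finset.mem_range] at hi
      have him : i ≤ m := by omega
      have hlo := linf_ge_on_geo hd hz hx hy hm i him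
      have hhi := linf_le_on_geo hz hx hy hm i him
      set ki := max (linf (z i)) 1 with hki
      have hlor : (X:ℝ) / 2 ≤ (ki:ℝ) := by
        have h1 : X ≤ 2 * ki := by omega
        have h2 : (X:ℝ) ≤ 2 * (ki:ℝ) := by exact_mod_cast h1
        linarith
      have hhir : (ki:ℝ) ≤ 2 * (X:ℝ) := by
        have h1 : ki ≤ 2 * X := by omega
        have h2 : (ki:ℝ) ≤ 2 * (X:ℝ) := by exact_mod_cast h1
        linarith
      have hb := rpow_mem_bound (α := α) (by positivity : (0:ℝ) < (X:ℝ)/2) hlor hhir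
      have e1 : ((X:ℝ)/2) ^ α = (2:ℝ) ^ (-α) * (X:ℝ) ^ α := by
        rw [Real.div_rpow hXpos.le (by norm_num : (0:ℝ) ≤ 2),
          Real.rpow_neg (by norm_num : (0:ℝ) ≤ 2)]
        ring
      have e2 : (2 * (X:ℝ)) ^ α = (2:ℝ) ^ α * (X:ℝ) ^ α := Real.mul_rpow (by norm_num) hXpos.le
      refine le_trans hb.2 (max_le ?_ ?_)
      · rw [e1]
        exact mul_le_mul_of_nonneg_right (le_max_left _ _) hXα.le
      · rw [e2]
        exact mul_le_mul_of_nonneg_right (le_max_right _ _) hXα.le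
    have hsum : ∑ i ∈ Finset.range (m + 1), nu α (z i) ≤
        ((m + 1 : ℕ):ℝ) * (c1 * (X:ℝ) ^ α) := by
      have := Finset.sum_le_card_nsmul (Finset.range (m + 1)) _ _ hterm
      simpa [nsmul_eq_mul] using this
    have hm2 : ((m + 1 : ℕ):ℝ) ≤ 2 * d * (r:ℝ) := by
      have hone : 1 ≤ d * r := Nat.one_le_iff_ne_zero.2 (by positivity)
      have h1 : m + 1 ≤ 2 * (d * r) := by omega
      have h2 : ((m + 1 : ℕ):ℝ) ≤ ((2 * (d * r) : ℕ):ℝ) := Nat.cast_le.2 h1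
      push_cast at h2 ⊢
      linarith
    rw [hrhox, hmax]
    calc ∑ i ∈ Finset.range (m + 1), nu α (z i) ≤ ((m + 1 : ℕ):ℝ) * (c1 * (X:ℝ) ^ α) := hsum
      _ ≤ (2 * d * (r:ℝ)) * (c1 * (X:ℝ) ^ α) := by
          apply mul_le_mul_of_nonneg_right hm2
          positivity
      _ = (2 * d * c1) * ((X:ℝ) ^ α * (r:ℝ)) := by ring
      _ ≤ K * ((X:ℝ) ^ α * (r:ℝ)) := by
          apply mul_le_mul_of_nonneg_right (le_max_left _ _)
          positivity
  · -- near case : use the dyadic bound with M = 3r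
    have hcount := fun k => count_small hd hz hx hy hm k
    have hM : ∀ i ∈ Finset.range (m + 1), max (linf (z i)) 1 ≤ 3 * r := by
      intro i hi
      rw [Finset.mem_range] at hi
      have hhi := linf_le_on_geo hz hx hy hm i (by omega)
      omega
    have hdy := dyadic_sum d hd α hα m z hcount (3 * r) (by omega) hM
    have h3r : ((3 * r : ℕ):ℝ) ^ (1 + α) = (3:ℝ) ^ (1 + α) * ((r:ℕ):ℝ) ^ (1 + α) := by
      push_cast
      exact Real.mul_rpow (by norm_num) hrpos.le
    have hr1α : ((r:ℕ):ℝ) ^ (1 + α) = (r:ℝ) ^ α * (r:ℝ) := by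
      rw [Real.rpow_add hrpos, Real.rpow_one]
      ring
    have hρge : min 1 ((2:ℝ) ^ α) * ((r:ℝ) ^ α * (r:ℝ)) ≤ rhox α x ((r:ℕ):ℝ) := by
      rw [hrhox]
      have hmem : (r:ℝ) ≤ max ((X:ℕ):ℝ) ((r:ℕ):ℝ) := le_max_right _ _
      have hmem2 : max ((X:ℕ):ℝ) ((r:ℕ):ℝ) ≤ 2 * (r:ℝ) := by
        apply max_le
        · have : X ≤ 2 * r := by omega
          exact_mod_cast this
        · linarith
      have hb := rpow_mem_bound (α := α) hrpos hmem hmem2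
      have e2 : (2 * (r:ℝ)) ^ α = (2:ℝ) ^ α * (r:ℝ) ^ α := Real.mul_rpow (by norm_num) hrpos.le
      have hrα : (0:ℝ) < (r:ℝ) ^ α := Real.rpow_pos_of_pos hrpos α
      have hmin : min 1 ((2:ℝ) ^ α) * (r:ℝ) ^ α ≤ min ((r:ℝ) ^ α) ((2 * (r:ℝ)) ^ α) := by
        apply le_min
        · nlinarith [min_le_left (1:ℝ) ((2:ℝ) ^ α)]
        · rw [e2]
          exact mul_le_mul_of_nonneg_right (min_le_right _ _) hrα.le
      nlinarith [hb.1]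
    calc ∑ i ∈ Finset.range (m + 1), nu α (z i) ≤ C2 * ((3 * r : ℕ):ℝ) ^ (1 + α) := hdy
      _ = C2 * (3:ℝ) ^ (1 + α) * ((r:ℝ) ^ α * (r:ℝ)) := by rw [h3r, hr1α]; ring
      _ ≤ C2 * (3:ℝ) ^ (1 + α) * ((min 1 ((2:ℝ) ^ α))⁻¹ * rhox α x ((r:ℕ):ℝ)) := by
          apply mul_le_mul_of_nonneg_left _ (by positivity)
          exact (le_inv_mul_iff₀ hminpos).2 hρge
      _ = (C2 * (3:ℝ) ^ (1 + α) * (min 1 ((2:ℝ) ^ α))⁻¹) * rhox α x ((r:ℕ):ℝ) := by ring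
      _ ≤ K * rhox α x ((r:ℕ):ℝ) := by
          apply mul_le_mul_of_nonneg_right (le_max_right _ _)
          have h0 : (0:ℝ) < max ((X:ℕ):ℝ) ((r:ℕ):ℝ) := lt_max_of_lt_right hrpos
          rw [hrhox]
          positivity

end Upper


/-- There is `c₁ ∈ (0,1]`, depending only on `α` and `d`, such that
for all `x ≠ y` and every L¹-geodesic `z_0, …, z_m` from `x` to `y`,
`c₁ ρ_x(|x-y|) ≤ ∑_{i=0}^m ν_{z_i} ≤ c₁⁻¹ ρ_x(|x-y|)`. -/
theorem geodesic_vertex_weight (d : ℕ) (hd : 1 ≤ d) (α : ℝ) (hα : -1 < α) :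
    ∃ c₁ : ℝ, 0 < c₁ ∧ c₁ ≤ 1 ∧
      ∀ x y : Fin d → ℤ, x ≠ y →
        ∀ (m : ℕ) (z : ℕ → Fin d → ℤ), IsPath z m → z 0 = x → z m = y →
          m = l1 (x - y) →
          c₁ * rhox α x ((linf (x - y) : ℕ) : ℝ) ≤
              ∑ i ∈ Finset.range (m + 1), nu α (z i) ∧
            ∑ i ∈ Finset.range (m + 1), nu α (z i) ≤
              c₁⁻¹ * rhox α x ((linf (x - y) : ℕ) : ℝ) := by
  obtain ⟨kl, hklpos, Hl⟩ := lower_bound d hd α hα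
  obtain ⟨K, hKpos, Hu⟩ := upper_bound d hd α hα
  refine ⟨min 1 (min kl K⁻¹), lt_min one_pos (lt_min hklpos (by positivity)),
    min_le_left _ _, ?_⟩
  intro x y hxy m z hz hx hy hm
  have hρ : 0 ≤ rhox α x ((linf (x - y) : ℕ) : ℝ) := by
    unfold rhox
    have hr1 : 1 ≤ linf (x - y) := linf_pos_of_ne hxy
    have hrpos : (0:ℝ) < ((linf (x - y) : ℕ):ℝ) := by exact_mod_cast hr1
    have h0 : (0:ℝ) < max ((linf x : ℕ):ℝ) ((linf (x - y) : ℕ):ℝ) := lt_max_of_lt_right hrpos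
    positivity
  constructor
  · calc min 1 (min kl K⁻¹) * rhox α x ((linf (x - y) : ℕ) : ℝ)
        ≤ kl * rhox α x ((linf (x - y) : ℕ) : ℝ) := by
          apply mul_le_mul_of_nonneg_right _ hρ
          exact le_trans (min_le_right _ _) (min_le_left _ _)
      _ ≤ _ := Hl x y hxy m z hz hx hy hm
  · have hc : min 1 (min kl K⁻¹) ≤ K⁻¹ := le_trans (min_le_right _ _) (min_le_right _ _)
    have hcpos : 0 < min 1 (min kl K⁻¹) := lt_min one_pos (lt_min hklpos (by positivity))
    have hKc : K ≤ (min 1 (min kl K⁻¹))⁻¹ := by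
      have h := inv_anti₀ hcpos hc
      rwa [inv_inv] at h
    calc ∑ i ∈ Finset.range (m + 1), nu α (z i)
        ≤ K * rhox α x ((linf (x - y) : ℕ) : ℝ) := Hu x y hxy m z hz hx hy hm
      _ ≤ (min 1 (min kl K⁻¹))⁻¹ * rhox α x ((linf (x - y) : ℕ) : ℝ) :=
          mul_le_mul_of_nonneg_right hKc hρ
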